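/- The linear map r1 : H_0* → H_0 defined by r1(e2*) = −a e1, r1(e1*) = a e2, r1(e3*) = 0 is an O-operator associated to the bimodule (R*, L*): for all a*, b* ∈ H_0*, r1(a*) · r1(b*) = r1(R*(r1(a*)) b* + L*(r1(b*)) a*). -/
import Mathlib

open Finset

/-- The Heisenberg product on `H₀`: `e₁ · e₃ = e₂`, other basis products zero. -/
def mulH0 (x y : Fin 3 → ℂ) : Fin 3 → ℂ :=
  fun k => if k = 1 then x 0 * y 2 else 0

/-- Structure constants of `H₀`. -/
def cH0 (i j k : Fin 3) : ℂ := if i = 0 ∧ j = 2 ∧ k = 1 then 1 else 0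

/-- The dual of left multiplication: `⟨L*(x)u*, eⱼ⟩ = ⟨u*, x · eⱼ⟩`. -/
noncomputable def Lstar0 (x u : Fin 3 → ℂ) : Fin 3 → ℂ :=
  fun j => ∑ i, ∑ k, x i * cH0 i j k * u k

/-- The dual of right multiplication: `⟨R*(x)u*, eⱼ⟩ = ⟨u*, eⱼ · x⟩`. -/
noncomputable def Rstar0 (x u : Fin 3 → ℂ) : Fin 3 → ℂ :=
  fun j => ∑ i, ∑ k, x i * cH0 j i k * u k

/-- The linear map `r₁ : H₀* → H₀`, `r₁(e₂*) = −a e₁`, `r₁(e₁*) = a e₂`,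
`r₁(e₃*) = 0`. -/
def r1map (a : ℂ) (u : Fin 3 → ℂ) : Fin 3 → ℂ :=
  fun k => if k = 0 then -a * u 1 else if k = 1 then a * u 0 else 0

/-- The linear map `r₂ : H₀* → H₀`, `r₂(e₂*) = a e₃`, `r₂(e₃*) = −a e₂`,
`r₂(e₁*) = 0`. -/
def r2map (a : ℂ) (u : Fin 3 → ℂ) : Fin 3 → ℂ :=
  fun k => if k = 2 then a * u 1 else if k = 1 then -a * u 2 else 0

/-- `r₁` is an `𝒪`-operator associated to the bimodule `(R*, L*)`:
`r₁(a*) · r₁(b*) = r₁(R*(r₁(a*)) b* + L*(r₁(b*)) a*)`. -/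
theorem r1_O_operator (a : ℂ) (u v : Fin 3 → ℂ) :
    mulH0 (r1map a u) (r1map a v)
      = r1map a (Rstar0 (r1map a u) v + Lstar0 (r1map a v) u) := by
  funext k
  fin_cases k <;>
    simp [mulH0, r1map, Rstar0, Lstar0, cH0, Fin.sum_univ_three] <;> ring
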